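/- arXiv:1002.2950 — 3 statements merged into one kernel-verified Lean document; each statement's English description precedes it below -/
import Mathlib

section
/- For the cubic flux f(u) = u³ and quadratic entropy U(u) = u²/2, the entropy dissipation E(u_-, u_+) across a shock is negative if and only if u_+ lies strictly between -u_- and u_- (for u_- > 0, i.e. u_+ ∈ (-u_-, u_-)). -/
/-- for the cubic flux and quadratic entropy, the entropy
dissipation `E(u₋,u₊)` is negative iff `u₊ ∈ (-u₋, u₋)` (for `u₋ > 0`). -/
theorem stmt7 (U F : ℝ → ℝ) (hU : ∀ u : ℝ, U u = u ^ 2 / 2)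
    (hF : ∀ u : ℝ, F u = 3 / 4 * u ^ 4)
    (lam : ℝ → ℝ → ℝ)
    (hlam : ∀ a b : ℝ, lam a b = b ^ 2 + b * a + a ^ 2)
    (E : ℝ → ℝ → ℝ)
    (hE : ∀ a b : ℝ, E a b = -lam a b * (U b - U a) + F b - F a)
    (um up : ℝ) (hum : 0 < um) (hne : up ≠ um) :
    E um up < 0 ↔ (-um < up ∧ up < um) := by
  have key : E um up = (up ^ 2 - um ^ 2) * (um - up) ^ 2 / 4 := by
    rw [hE, hlam, hU, hU, hF, hF]; ring
  rw [key]
  constructor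
  · intro h
    have hsq : up ^ 2 < um ^ 2 := by nlinarith [sq_nonneg (um - up)]
    constructor <;> nlinarith
  · rintro ⟨h1, h2⟩
    have hsq : up ^ 2 < um ^ 2 := by nlinarith
    have hne2 : um - up ≠ 0 := sub_ne_zero.mpr (Ne.symm hne)
    have : (um - up) ^ 2 > 0 := by positivity
    nlinarith
end

section
/- Let w be a C² traveling wave as above with quadratic entropy: then the entropy dissipation satisfies -λ((u_+²-u_-²)/2) + F(u_+) - F(u_-) = -α ∫_ℝ |w'(y)|^{p+2} dy ≤ 0, where F' (u) = u f'(u). In particular, the limiting shock satisfies the entropy inequality for U(u)=u²/2. -/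
/-!
Writing `V(u) = λ(u - u₋)²/2 - ∫₀ᵘ f + u f(u₋)`, the profile equation is the damped Newton
equation `w'' = -V'(w) - α|w'|ᵖw'`, so the mechanical energy `w'²/2 + V(w)` decreases at rate
`α|w'|^{p+2}`. Integrating over `ℝ` gives `V(u₊) - V(u₋) = -α ∫ |w'|^{p+2}`. Integration by parts
writes `F(u) = u f(u) - ∫₀ᵘ f`, and the two sides of the claimed identity then differ by
`u₊` times the Rankine–Hugoniot defect `-λ(u₊ - u₋) + f(u₊) - f(u₋)`, which vanishes by letting
`y → +∞` in the profile equation.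
-/

open Filter MeasureTheory Topology

lemma tendsto_abs_rpow_mul_self_nhds_zero {p : ℝ} (hp : 0 < p + 1) :
    Tendsto (fun x : ℝ => |x| ^ p * x) (𝓝 0) (𝓝 0) := by
  have hpow : Tendsto (fun x : ℝ => |x| ^ (p + 1)) (𝓝 0) (𝓝 0) := by
    simpa [Real.zero_rpow hp.ne'] using
      (continuous_abs.rpow_const fun _ => Or.inr hp.le).tendsto (0 : ℝ)
  refine squeeze_zero_norm (fun x => le_of_eq ?_) hpow
  rw [Real.norm_eq_abs, abs_mul, abs_of_nonneg (Real.rpow_nonneg (abs_nonneg x) p),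
    Real.rpow_add' (abs_nonneg x) hp.ne', Real.rpow_one]

lemma abs_rpow_mul_sq {p : ℝ} (hp : p + 2 ≠ 0) (x : ℝ) : |x| ^ p * x ^ 2 = |x| ^ (p + 2) := by
  rw [Real.rpow_add' (abs_nonneg x) hp, Real.rpow_two, sq_abs]

lemma integral_id_mul_deriv {f : ℝ → ℝ} (hf : ContDiff ℝ 1 f) (a b : ℝ) :
    ∫ v in a..b, v * deriv f v = b * f b - a * f a - ∫ v in a..b, f v := by
  simpa using intervalIntegral.integral_mul_deriv_eq_deriv_mul (u' := fun _ => 1)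
    (fun x _ => hasDerivAt_id x)
    (fun x _ => (hf.differentiable one_ne_zero x).hasDerivAt)
    intervalIntegrable_const ((hf.continuous_deriv le_rfl).intervalIntegrable a b)

section MechanicalEnergy

variable {V V' w w' w'' : ℝ → ℝ}

lemma hasDerivAt_kinetic_add_potential (hV : ∀ u, HasDerivAt V (V' u) u)
    (hw : ∀ y, HasDerivAt w (w' y) y) (hw' : ∀ y, HasDerivAt w' (w'' y) y) (y : ℝ) :
    HasDerivAt (fun y => w' y ^ 2 / 2 + V (w y)) (w' y * (w'' y + V' (w y))) y := by
  refine ((((hw' y).pow 2).div_const 2).add ((hV (w y)).comp y (hw y))).congr_deriv ?_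
  push_cast
  ring

lemma tendsto_kinetic_add_potential {l : Filter ℝ} {u : ℝ} (hV : ContinuousAt V u)
    (hw : Tendsto w l (𝓝 u)) (hw' : Tendsto w' l (𝓝 0)) :
    Tendsto (fun y => w' y ^ 2 / 2 + V (w y)) l (𝓝 (V u)) := by
  simpa using ((hw'.pow 2).div_const 2).add (hV.tendsto.comp hw)

end MechanicalEnergy

noncomputable def wavePotential (f : ℝ → ℝ) (lam um u : ℝ) : ℝ :=
  lam * (u - um) ^ 2 / 2 - (∫ v in (0 : ℝ)..u, f v) + u * f um

section TravelingWave

variable {f w : ℝ → ℝ} {α p lam um : ℝ}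

lemma hasDerivAt_wavePotential (hf : Continuous f) (u : ℝ) :
    HasDerivAt (wavePotential f lam um) (lam * (u - um) - f u + f um) u := by
  have hprim := (hf.integral_hasStrictDerivAt 0 u).hasDerivAt
  refine (((((hasDerivAt_id' u).sub_const um).pow 2).const_mul lam |>.div_const 2).sub hprim
    |>.add ((hasDerivAt_id' u).mul_const (f um))).congr_deriv ?_
  push_cast
  ring

lemma rankine_hugoniot_of_tendsto {l : Filter ℝ} [l.NeBot] {u : ℝ} (hf : ContinuousAt f u)
    (hp : 0 < p + 1)
    (hODE : ∀ y, deriv (deriv w) y + α * |deriv w y| ^ p * deriv w y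
        = -lam * (w y - um) + f (w y) - f um)
    (hw : Tendsto w l (𝓝 u)) (hd1 : Tendsto (deriv w) l (𝓝 0))
    (hd2 : Tendsto (deriv (deriv w)) l (𝓝 0)) :
    -lam * (u - um) + f u - f um = 0 := by
  have hdamp : Tendsto (fun y => α * (|deriv w y| ^ p * deriv w y)) l (𝓝 0) := by
    simpa using ((tendsto_abs_rpow_mul_self_nhds_zero hp).comp hd1).const_mul α
  have hlhs : Tendsto (fun y => -lam * (w y - um) + f (w y) - f um) l (𝓝 0) := by
    rw [← add_zero 0]
    exact (hd2.add hdamp).congr fun y => by rw [← mul_assoc, hODE]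
  have hrhs : Tendsto (fun y => -lam * (w y - um) + f (w y) - f um) l
      (𝓝 (-lam * (u - um) + f u - f um)) :=
    (((hw.sub_const um).const_mul (-lam)).add (hf.tendsto.comp hw)).sub_const (f um)
  exact tendsto_nhds_unique hrhs hlhs

lemma wavePotential_sub_eq_neg_mul_integral {up : ℝ} (hf : Continuous f) (hp : p + 2 ≠ 0)
    (hw : ContDiff ℝ 2 w)
    (hODE : ∀ y, deriv (deriv w) y + α * |deriv w y| ^ p * deriv w y
        = -lam * (w y - um) + f (w y) - f um)
    (hlimm : Tendsto w atBot (𝓝 um)) (hlimp : Tendsto w atTop (𝓝 up))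
    (hd1m : Tendsto (deriv w) atBot (𝓝 0)) (hd1p : Tendsto (deriv w) atTop (𝓝 0))
    (hInt : Integrable (fun y => |deriv w y| ^ (p + 2))) :
    wavePotential f lam um up - wavePotential f lam um um
      = -α * ∫ y, |deriv w y| ^ (p + 2) := by
  have henergy : ∀ y, HasDerivAt (fun y => deriv w y ^ 2 / 2 + wavePotential f lam um (w y))
      (-α * |deriv w y| ^ (p + 2)) y := by
    intro y
    convert hasDerivAt_kinetic_add_potential (hasDerivAt_wavePotential hf)
      (fun y => (hw.differentiable two_ne_zero y).hasDerivAt)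
      (fun y => (hw.differentiable_deriv_two y).hasDerivAt) y using 1
    rw [← abs_rpow_mul_sq hp]
    linear_combination -(deriv w y) * hODE y
  rw [← integral_const_mul]
  exact (integral_of_hasDerivAt_of_tendsto henergy (hInt.const_mul (-α))
    (tendsto_kinetic_add_potential ((hasDerivAt_wavePotential hf um).continuousAt) hlimm hd1m)
    (tendsto_kinetic_add_potential ((hasDerivAt_wavePotential hf up).continuousAt) hlimp
      hd1p)).symm

end TravelingWave

theorem stmt11_general (f : ℝ → ℝ) (hf : ContDiff ℝ 1 f) (α : ℝ) (hα : 0 < α)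
    (p : ℝ) (hp : 0 ≤ p) (lam um up : ℝ)
    (F : ℝ → ℝ) (hF : ∀ u : ℝ, F u = ∫ v in (0:ℝ)..u, v * deriv f v)
    (w : ℝ → ℝ) (hw : ContDiff ℝ 3 w)
    (hODE : ∀ y : ℝ,
      deriv (deriv w) y + α * |deriv w y| ^ p * deriv w y
        = -lam * (w y - um) + f (w y) - f um)
    (hlimm : Tendsto w atBot (nhds um)) (hlimp : Tendsto w atTop (nhds up))
    (hd1m : Tendsto (deriv w) atBot (nhds 0))
    (hd1p : Tendsto (deriv w) atTop (nhds 0))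
    (hd2p : Tendsto (deriv (deriv w)) atTop (nhds 0))
    (hInt : Integrable (fun y : ℝ => |deriv w y| ^ (p + 2))) :
    -lam * ((up ^ 2 - um ^ 2) / 2) + F up - F um
        = -α * ∫ y : ℝ, |deriv w y| ^ (p + 2)
      ∧ -lam * ((up ^ 2 - um ^ 2) / 2) + F up - F um ≤ 0 := by
  have hRH := rankine_hugoniot_of_tendsto hf.continuous.continuousAt (by linarith) hODE hlimp
    hd1p hd2p
  have hdiss := wavePotential_sub_eq_neg_mul_integral hf.continuous (by linarith)
    (hw.of_le (by norm_num)) hODE hlimm hlimp hd1m hd1p hInt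
  have hidentity : -lam * ((up ^ 2 - um ^ 2) / 2) + F up - F um
      = -α * ∫ y : ℝ, |deriv w y| ^ (p + 2) := by
    rw [← hdiss, hF, hF, integral_id_mul_deriv hf, integral_id_mul_deriv hf, wavePotential,
      wavePotential]
    linear_combination up * hRH
  refine ⟨hidentity, hidentity ▸ ?_⟩
  have : 0 ≤ ∫ y : ℝ, |deriv w y| ^ (p + 2) :=
    integral_nonneg fun y => Real.rpow_nonneg (abs_nonneg _) _
  nlinarith

/-- for a traveling wave with quadratic entropy, the entropy
dissipation equals `-α ∫ |w'|^{p+2}` and is nonpositive. -/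
theorem stmt11 (f : ℝ → ℝ) (hf : ContDiff ℝ 1 f) (α : ℝ) (hα : 0 < α)
    (p : ℝ) (hp : 0 ≤ p) (lam um up : ℝ)
    (F : ℝ → ℝ) (hF : ∀ u : ℝ, F u = ∫ v in (0:ℝ)..u, v * deriv f v)
    (w : ℝ → ℝ) (hw : ContDiff ℝ 3 w)
    (hODE : ∀ y : ℝ,
      deriv (deriv w) y + α * |deriv w y| ^ p * deriv w y
        = -lam * (w y - um) + f (w y) - f um)
    (hlimm : Tendsto w atBot (nhds um)) (hlimp : Tendsto w atTop (nhds up))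
    (hd1m : Tendsto (deriv w) atBot (nhds 0))
    (hd1p : Tendsto (deriv w) atTop (nhds 0))
    (hd2m : Tendsto (deriv (deriv w)) atBot (nhds 0))
    (hd2p : Tendsto (deriv (deriv w)) atTop (nhds 0))
    (hInt : Integrable (fun y : ℝ => |deriv w y| ^ (p + 2))) :
    -lam * ((up ^ 2 - um ^ 2) / 2) + F up - F um
        = -α * ∫ y : ℝ, |deriv w y| ^ (p + 2)
      ∧ -lam * ((up ^ 2 - um ^ 2) / 2) + F up - F um ≤ 0 :=
  stmt11_general f hf α hα p hp lam um up F hF w hw hODE hlimm hlimp hd1m hd1p hd2p hInt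
end

section
/- Tadmor's two-point entropy conservative flux: for a scalar conservation law with flux g (expressed in the entropy variable v) and entropy flux G with G'(v) = v g'(v), the numerical flux g*(v₀,v₁) := ∫₀¹ g(v₀+s(v₁-v₀)) ds satisfies the discrete entropy identity (v₁ - v₀)·g*(v₀,v₁) = ψ(v₁) - ψ(v₀), where ψ(v) := v g(v) - G(v). -/
/-!
Differentiating `ψ v = v g(v) - ∫₀^v s g'(s) ds` gives `ψ' = g`, so `ψ(v₁) - ψ(v₀) = ∫_{v₀}^{v₁} g`,
and the substitution `x = v₀ + s (v₁ - v₀)` turns this integral into `(v₁ - v₀) g*(v₀, v₁)`.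
-/

open intervalIntegral

theorem smul_integral_comp_add_mul_sub {E : Type*} [NormedAddCommGroup E] [NormedSpace ℝ E]
    (f : ℝ → E) (a b : ℝ) :
    (b - a) • ∫ s in (0 : ℝ)..1, f (a + s * (b - a)) = ∫ x in a..b, f x := by
  simp_rw [mul_comm _ (b - a), smul_integral_comp_add_mul, mul_zero, add_zero, mul_one,
    add_sub_cancel]

theorem sub_mul_integral_comp_add_mul_sub_eq_sub {f f' : ℝ → ℝ}
    (hf : ∀ x, HasDerivAt f (f' x) x) (hf' : Continuous f') (a b : ℝ) :
    (b - a) * ∫ s in (0 : ℝ)..1, f' (a + s * (b - a)) = f b - f a := by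
  rw [← smul_eq_mul, smul_integral_comp_add_mul_sub,
    integral_eq_sub_of_hasDerivAt (fun x _ => hf x) (hf'.intervalIntegrable a b)]

theorem hasDerivAt_mul_sub_integral_mul_deriv {g : ℝ → ℝ} (hg : ContDiff ℝ 1 g) (a x : ℝ) :
    HasDerivAt (fun v => v * g v - ∫ s in a..v, s * deriv g s) (g x) x := by
  have hsg' : Continuous fun s => s * deriv g s := continuous_id.mul (hg.continuous_deriv le_rfl)
  have hG : HasDerivAt (fun v => ∫ s in a..v, s * deriv g s) (x * deriv g x) x :=
    integral_hasDerivAt_right (hsg'.intervalIntegrable a x)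
      hsg'.aestronglyMeasurable.stronglyMeasurableAtFilter hsg'.continuousAt
  have hvg : HasDerivAt (fun v => v * g v) (1 * g x + x * deriv g x) x :=
    (hasDerivAt_id x).mul (hg.differentiable one_ne_zero x).hasDerivAt
  simpa only [one_mul, add_sub_cancel_right] using hvg.fun_sub hG

/-- Tadmor's two-point entropy conservative flux (scalar case):
with `G'(v) = v g'(v)` and `ψ(v) = v g(v) - G(v)`, the numerical flux
`g*(v₀,v₁) = ∫₀¹ g(v₀ + s(v₁-v₀)) ds` satisfies
`(v₁ - v₀) g*(v₀,v₁) = ψ(v₁) - ψ(v₀)`. -/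
theorem stmt19 (g : ℝ → ℝ) (hg : ContDiff ℝ 1 g)
    (G : ℝ → ℝ) (hG : ∀ v : ℝ, G v = ∫ s in (0:ℝ)..v, s * deriv g s)
    (ψ : ℝ → ℝ) (hψ : ∀ v : ℝ, ψ v = v * g v - G v)
    (gstar : ℝ → ℝ → ℝ)
    (hgstar : ∀ v₀ v₁ : ℝ,
      gstar v₀ v₁ = ∫ s in (0:ℝ)..1, g (v₀ + s * (v₁ - v₀))) :
    ∀ v₀ v₁ : ℝ, (v₁ - v₀) * gstar v₀ v₁ = ψ v₁ - ψ v₀ := by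
  have hψ_eq : ψ = fun v => v * g v - ∫ s in (0:ℝ)..v, s * deriv g s := by
    funext v
    rw [hψ, hG]
  intro v₀ v₁
  rw [hgstar, hψ_eq]
  exact sub_mul_integral_comp_add_mul_sub_eq_sub (hasDerivAt_mul_sub_integral_mul_deriv hg 0)
    hg.continuous v₀ v₁
end
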